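/- arXiv:1311.1560 — 3 statements merged into one kernel-verified Lean document; each statement's English description precedes it below -/
import Mathlib

section
/- Let x ⊂ ℝ² be a unimodular lattice, Q₀(v₁,v₂) = v₁v₂, and g_t = diag(e^t, e^{−t}). If the set of values Q₀(x \ {0}) contains sequences approaching 0 from both the positive and the negative side, then Q₀(x \ {0}) is dense in ℝ. -/
/-!
If `u` is a lattice vector with `Q₀ u = q`, then `n • u` is a lattice vector with `Q₀ (n • u) = n² q`.
The numbers `n √q` form a progression of step `√q`, so when `0 < q` is small one of them lies
close to `√t` for any given `t ≥ 0`, and then `n² q` lies close to `t`. Small negative values of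
`Q₀` handle negative targets in the same way.
-/

open Metric

lemma exists_succ_sq_mul_dist_lt {x r : ℝ} (hx : 0 ≤ x) (hr : 0 < r) :
    ∃ ε > 0, ∀ q, 0 < q → q < ε → ∃ n : ℕ, dist (((n : ℝ) + 1) ^ 2 * q) x < r := by
  obtain ⟨δ, hδ, hsq⟩ := continuousAt_iff.mp
    ((continuous_pow 2).continuousAt (x := √x)) r hr
  refine ⟨δ ^ 2, by positivity, fun q hq hqε => ?_⟩
  set s := √q
  have hs : 0 < s := Real.sqrt_pos.mpr hq
  have hsδ : s < δ := (Real.sqrt_lt' hδ).mpr hqε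
  set n := ⌊√x / s⌋₊
  -- `(n + 1) s` is the first point of the progression `s ℕ` beyond `√x`.
  have hlo : √x < (n + 1) * s := (div_lt_iff₀ hs).mp (Nat.lt_floor_add_one _)
  have hhi : (n : ℝ) * s ≤ √x := (le_div_iff₀ hs).mp (Nat.floor_le (by positivity))
  refine ⟨n, ?_⟩
  have hnear : dist ((n + 1) * s) √x < δ := by
    rw [Real.dist_eq, abs_of_pos (sub_pos.mpr hlo)]
    linarith
  simpa [mul_pow, s, Real.sq_sqrt hq.le, Real.sq_sqrt hx] using hsq hnear

lemma dense_of_sq_mul_mem {S : Set ℝ} (hmul : ∀ q ∈ S, ∀ n : ℕ, ((n : ℝ) + 1) ^ 2 * q ∈ S)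
    (hpos : ∀ ε > 0, ∃ q ∈ S, 0 < q ∧ q < ε) (hneg : ∀ ε > 0, ∃ q ∈ S, -ε < q ∧ q < 0) :
    Dense S := by
  rw [dense_iff]
  intro x r hr
  rcases le_or_gt 0 x with hx | hx
  · obtain ⟨ε, hε, hnear⟩ := exists_succ_sq_mul_dist_lt hx hr
    obtain ⟨q, hqS, hq, hqε⟩ := hpos ε hε
    obtain ⟨n, hn⟩ := hnear q hq hqε
    exact ⟨_, mem_ball.mpr hn, hmul q hqS n⟩
  · obtain ⟨ε, hε, hnear⟩ := exists_succ_sq_mul_dist_lt (neg_nonneg.mpr hx.le) hr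
    obtain ⟨q, hqS, hqε, hq⟩ := hneg ε hε
    obtain ⟨n, hn⟩ := hnear (-q) (neg_pos.mpr hq) (by linarith)
    refine ⟨_, mem_ball.mpr ?_, hmul q hqS n⟩
    rwa [mul_neg, dist_neg_neg] at hn

lemma fst_mul_snd_zsmul (k : ℤ) (u : ℝ × ℝ) :
    (k • u).1 * (k • u).2 = (k : ℝ) ^ 2 * (u.1 * u.2) := by
  rw [Prod.smul_fst, Prod.smul_snd, zsmul_eq_mul, zsmul_eq_mul]
  ring

theorem stmt1_general (L : Set (ℝ × ℝ)) (v w : ℝ × ℝ)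
    (hL : L = {u : ℝ × ℝ | ∃ m n : ℤ, u = m • v + n • w})
    (hpos : ∀ ε > 0, ∃ u ∈ L, 0 < u.1 * u.2 ∧ u.1 * u.2 < ε)
    (hneg : ∀ ε > 0, ∃ u ∈ L, -ε < u.1 * u.2 ∧ u.1 * u.2 < 0) :
    Dense ((fun u : ℝ × ℝ => u.1 * u.2) '' (L \ {0})) := by
  have hspan : L = Submodule.span ℤ {v, w} := by
    ext u
    simp [hL, Submodule.mem_span_pair, eq_comm]
  have hne : ∀ u : ℝ × ℝ, u.1 * u.2 ≠ 0 → u ≠ 0 := by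
    rintro u hu rfl
    simp at hu
  refine dense_of_sq_mul_mem ?_ ?_ ?_
  · rintro _ ⟨u, ⟨huL, hu0⟩, rfl⟩ n
    refine ⟨((n + 1 : ℕ) : ℤ) • u, ⟨?_, ?_⟩, ?_⟩
    · rw [hspan] at huL ⊢
      exact Submodule.smul_mem _ _ huL
    · exact smul_ne_zero (by positivity) hu0
    · dsimp only
      rw [fst_mul_snd_zsmul]
      push_cast
      rfl
  · intro ε hε
    obtain ⟨u, huL, hu, huε⟩ := hpos ε hε
    exact ⟨_, ⟨u, ⟨huL, hne u hu.ne'⟩, rfl⟩, hu, huε⟩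
  · intro ε hε
    obtain ⟨u, huL, huε, hu⟩ := hneg ε hε
    exact ⟨_, ⟨u, ⟨huL, hne u hu.ne⟩, rfl⟩, huε, hu⟩

/-- If a unimodular lattice x ⊂ ℝ² is such that Q₀(x \ {0}) (where
Q₀(v₁,v₂) = v₁v₂) contains sequences approaching 0 from both sides, then
Q₀(x \ {0}) is dense in ℝ. -/
theorem stmt1 (L : Set (ℝ × ℝ)) (v w : ℝ × ℝ)
    (hunimod : |v.1 * w.2 - v.2 * w.1| = 1)
    (hL : L = {u : ℝ × ℝ | ∃ m n : ℤ, u = m • v + n • w})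
    (hpos : ∀ ε > 0, ∃ u ∈ L, 0 < u.1 * u.2 ∧ u.1 * u.2 < ε)
    (hneg : ∀ ε > 0, ∃ u ∈ L, -ε < u.1 * u.2 ∧ u.1 * u.2 < 0) :
    Dense ((fun u : ℝ × ℝ => u.1 * u.2) '' (L \ {0})) :=
  stmt1_general L v w hL hpos hneg
end

section
/- Let x be a unimodular lattice in ℝ², Q₀(v₁,v₂)=v₁v₂, F⁺ = {g_t : t ≥ 0} with g_t = diag(e^t, e^{−t}), a ≠ 0 a real number, and v ∈ ℝ² with Q₀(v) = a. If some lattice x₀ in the closure of the orbit {g_t x : t ∈ ℝ} contains v, then a lies in the closure of Q₀(x \ {0}). -/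
open Matrix

noncomputable section

abbrev SL2R := Matrix.SpecialLinearGroup (Fin 2) ℝ

/-- The diagonal flow g_t = diag(e^t, e^{-t}). -/
def gT (t : ℝ) : SL2R :=
  ⟨!![Real.exp t, 0; 0, Real.exp (-t)], by
    simp [Matrix.det_fin_two_of, ← Real.exp_add]⟩

/-- Γ = SL₂(ℤ) inside SL₂(ℝ). -/
def Gamma : Subgroup SL2R :=
  (Matrix.SpecialLinearGroup.map (n := Fin 2) (Int.castRingHom ℝ)).range

/-- X = SL₂(ℝ)/SL₂(ℤ), the space of unimodular lattices in ℝ², with the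
quotient topology. -/
instance : TopologicalSpace SL2R :=
  TopologicalSpace.induced (fun g : SL2R => (g : Matrix (Fin 2) (Fin 2) ℝ)) inferInstance

abbrev XSp := SL2R ⧸ Gamma

/-- `v` belongs to the lattice represented by `x ∈ X`, i.e. for some representative
`g` of `x`, `v` is an integer combination of the columns of `g`. -/
def latMem (v : Fin 2 → ℝ) (x : XSp) : Prop :=
  ∃ g : SL2R, (QuotientGroup.mk g : XSp) = x ∧
    ∃ p : Fin 2 → ℤ, v = (g : Matrix (Fin 2) (Fin 2) ℝ).mulVec fun i => (p i : ℝ)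

/-! The lattices having a nonzero vector with `Q₀`-value in a given open set `U ∌ 0` form an
open subset of `X`, because the vectors `g p` (`p ∈ ℤ²`) of the lattice `gℤ²` depend continuously
on `g`. This open set contains `x₀`, hence some `g_t x`; as `g_t` preserves `Q₀`, pulling that
vector back by `g_{-t}` gives a nonzero vector of `x` with value in `U`. -/

def Q₀ (w : Fin 2 → ℝ) : ℝ := w 0 * w 1

lemma Q₀_gT_mulVec (t : ℝ) (w : Fin 2 → ℝ) :
    Q₀ ((gT t : Matrix (Fin 2) (Fin 2) ℝ) *ᵥ w) = Q₀ w := by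
  calc _ = Real.exp t * w 0 * (Real.exp (-t) * w 1) := by
        simp [Q₀, gT, Matrix.mulVec, vecHead, vecTail]
    _ = Q₀ w := by
        rw [mul_mul_mul_comm, ← Real.exp_add, add_neg_cancel, Real.exp_zero, one_mul, Q₀]

lemma gT_inv (t : ℝ) : (gT t)⁻¹ = gT (-t) := by
  ext i j
  rw [Matrix.SpecialLinearGroup.coe_inv]
  fin_cases i <;> fin_cases j <;> simp [Matrix.adjugate_fin_two, gT]

lemma latMem_mk_iff (w : Fin 2 → ℝ) (g : SL2R) :
    latMem w (QuotientGroup.mk g) ↔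
      ∃ p : Fin 2 → ℤ, w = (g : Matrix (Fin 2) (Fin 2) ℝ) *ᵥ fun i => (p i : ℝ) := by
  refine ⟨?_, fun ⟨p, hp⟩ => ⟨g, rfl, p, hp⟩⟩
  rintro ⟨g', hg', p, rfl⟩
  obtain ⟨γ, hγ⟩ : g⁻¹ * g' ∈ Gamma := QuotientGroup.eq.mp hg'.symm
  rw [eq_inv_mul_iff_mul_eq] at hγ
  refine ⟨(γ : Matrix (Fin 2) (Fin 2) ℤ) *ᵥ p, ?_⟩
  rw [← hγ, Matrix.SpecialLinearGroup.coe_mul, ← Matrix.mulVec_mulVec]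
  congr 1
  funext i
  exact (RingHom.map_mulVec (Int.castRingHom ℝ) _ p i).symm

lemma latMem_smul {w : Fin 2 → ℝ} {x : XSp} (h : SL2R) (hw : latMem w x) :
    latMem ((h : Matrix (Fin 2) (Fin 2) ℝ) *ᵥ w) (h • x) := by
  obtain ⟨g, rfl, p, rfl⟩ := hw
  exact ⟨h * g, rfl, p, by rw [Matrix.SpecialLinearGroup.coe_mul, Matrix.mulVec_mulVec]⟩

lemma isOpen_setOf_exists_latMem {S : Set (Fin 2 → ℝ)} (hS : IsOpen S) :
    IsOpen {y : XSp | ∃ w ∈ S, latMem w y} := by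
  rw [isOpen_coinduced (f := (QuotientGroup.mk : SL2R → XSp))]
  have hpre : (QuotientGroup.mk : SL2R → XSp) ⁻¹' {y | ∃ w ∈ S, latMem w y} =
      ⋃ p : Fin 2 → ℤ,
        {g : SL2R | (g : Matrix (Fin 2) (Fin 2) ℝ) *ᵥ (fun i => (p i : ℝ)) ∈ S} := by
    ext g
    simp only [Set.mem_preimage, Set.mem_ofPred_eq, Set.mem_iUnion, latMem_mk_iff]
    constructor
    · rintro ⟨w, hw, p, rfl⟩
      exact ⟨p, hw⟩
    · rintro ⟨p, hp⟩
      exact ⟨_, hp, p, rfl⟩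
  rw [hpre]
  exact isOpen_iUnion fun p =>
    hS.preimage (continuous_induced_dom.matrix_mulVec continuous_const)

/-- if some lattice x₀ in the closure of the g_t-orbit of x contains a
vector v with Q₀(v) = a ≠ 0, then a lies in the closure of Q₀(x \ {0}). -/
theorem stmt2 (x : XSp) (a : ℝ) (ha : a ≠ 0) (v : Fin 2 → ℝ) (hv : v 0 * v 1 = a)
    (h : ∃ x₀ ∈ closure {y : XSp | ∃ t : ℝ, y = gT t • x}, latMem v x₀) :
    a ∈ closure ((fun w : Fin 2 → ℝ => w 0 * w 1) '' {w | latMem w x ∧ w ≠ 0}) := by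
  obtain ⟨x₀, hx₀, hvx₀⟩ := h
  refine _root_.mem_closure_iff.mpr fun U hU haU => ?_
  set S : Set (Fin 2 → ℝ) := Q₀ ⁻¹' (U \ {0})
  have hS : IsOpen S :=
    (hU.sdiff isClosed_singleton).preimage ((continuous_apply 0).mul (continuous_apply 1))
  have hQv : Q₀ v = a := hv
  have hx₀S : x₀ ∈ {y | ∃ w ∈ S, latMem w y} :=
    ⟨v, ⟨hQv ▸ haU, hQv ▸ ha⟩, hvx₀⟩
  obtain ⟨_, ⟨w, hwS, hw⟩, t, rfl⟩ :=
    _root_.mem_closure_iff.mp hx₀ _ (isOpen_setOf_exists_latMem hS) hx₀S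
  have hu : latMem ((gT (-t) : Matrix (Fin 2) (Fin 2) ℝ) *ᵥ w) x := by
    simpa only [← gT_inv, inv_smul_smul] using latMem_smul (gT t)⁻¹ hw
  have hQu := Q₀_gT_mulVec (-t) w
  refine ⟨_, hQu ▸ hwS.1, _, ⟨hu, fun h0 => hwS.2 ?_⟩, hQu⟩
  rw [← hQu, h0]
  simp [Q₀]

end
end

section
/- A countable intersection of α-winning sets for Schmidt's game on ℝ^d is α-winning. -/
/-- The history of Bob's first i+1 moves (balls given by center and radius). -/
def hist {E : Type*} (x : ℕ → E) (r : ℕ → ℝ) (i : ℕ) : List (E × ℝ) :=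
  List.ofFn fun j : Fin (i + 1) => (x j, r j)

/-- `S` is α-winning for Schmidt's game on ℝ^d: for every β ∈ (0,1) Alice has a
strategy `f` (choosing the center of her ball as a function of the history of
Bob's balls; her radius is α·rᵢ) such that for every legal play by Bob
(r₀ > 0, rᵢ₊₁ = βαrᵢ, dist(xᵢ₊₁, xᵢ') ≤ (1−β)αrᵢ), Alice's moves are legal
(dist(xᵢ', xᵢ) ≤ (1−α)rᵢ) and every point of ⋂ᵢ Bᵢ lies in S. -/
def AlphaWinning {d : ℕ} (S : Set (EuclideanSpace ℝ (Fin d))) (α : ℝ) : Prop :=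
  ∀ β ∈ Set.Ioo (0 : ℝ) 1,
    ∃ f : List (EuclideanSpace ℝ (Fin d) × ℝ) → EuclideanSpace ℝ (Fin d),
      ∀ (x : ℕ → EuclideanSpace ℝ (Fin d)) (r : ℕ → ℝ),
        0 < r 0 →
        (∀ i, r (i + 1) = β * (α * r i)) →
        (∀ i, dist (x (i + 1)) (f (hist x r i)) ≤ (1 - β) * (α * r i)) →
        (∀ i, dist (f (hist x r i)) (x i) ≤ (1 - α) * r i) ∧
        ∀ z, (∀ i, dist z (x i) ≤ r i) → z ∈ S

/-!
Alice plays the strategy for `S n` on the turns `2ⁿ(2k+1) - 1`, `k = 0, 1, …`; every turn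
belongs to exactly one of these subsequences. Along the `n`-th subsequence, Bob's balls shrink by
the constant factor `(βα)^(2ⁿ⁺¹) = βₙα` with `βₙ = (αβ)^(2ⁿ⁺¹)/α ∈ (0,1)`, and since Alice's
balls are nested in Bob's, everything played between two of these turns is an admissible single
move of Bob in the `(α, βₙ)`-game. Hence the intersection of Bob's balls lies in every `S n`.
-/

open Set

namespace SchmidtGame

theorem mul_pow_div_mem_Ioo {α β : ℝ} (hα : α ∈ Ioo (0 : ℝ) 1) (hβ : β ∈ Ioo (0 : ℝ) 1) {m : ℕ}
    (hm : m ≠ 0) : (α * β) ^ m / α ∈ Ioo (0 : ℝ) 1 := by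
  obtain ⟨hα₀, hα₁⟩ := hα
  obtain ⟨hβ₀, hβ₁⟩ := hβ
  refine ⟨by positivity, (div_lt_one hα₀).2 ?_⟩
  calc (α * β) ^ m ≤ α * β := pow_le_of_le_one (by positivity) (by nlinarith) hm
    _ < α := mul_lt_of_lt_one_right hα₀ hβ₁

theorem radius_add {α β : ℝ} {r : ℕ → ℝ} (hr : ∀ i, r (i + 1) = β * (α * r i)) (a s : ℕ) :
    r (a + s) = (β * α) ^ s * r a := by
  induction s with
  | zero => simp
  | succ s ih => rw [← add_assoc, hr, ih, pow_succ]; ring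

theorem radius_pos {α β : ℝ} (hα : 0 < α) (hβ : 0 < β) {r : ℕ → ℝ} (h0 : 0 < r 0)
    (hr : ∀ i, r (i + 1) = β * (α * r i)) (i : ℕ) : 0 < r i := by
  rw [← zero_add i, radius_add hr]
  positivity

section Strategies

variable {E : Type*}

def copyPlay (f : List (E × ℝ) → E) (x : ℕ → E) (r : ℕ → ℝ) (k : ℕ) : ℕ → E
  | j => if j ≤ k then x j else f (List.ofFn fun t : Fin j => (copyPlay f x r k t, r t))
termination_by j => j
decreasing_by exact t.isLt

variable (f : List (E × ℝ) → E) (x : ℕ → E) (r : ℕ → ℝ) {k : ℕ}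

theorem copyPlay_of_le {j : ℕ} (hj : j ≤ k) : copyPlay f x r k j = x j := by
  rw [copyPlay, if_pos hj]

theorem copyPlay_succ_of_le {j : ℕ} (hj : k ≤ j) :
    copyPlay f x r k (j + 1) = f (hist (copyPlay f x r k) r j) := by
  rw [copyPlay, if_neg (by omega)]
  rfl

theorem hist_copyPlay_of_le {j : ℕ} (hj : j ≤ k) : hist (copyPlay f x r k) r j = hist x r j := by
  unfold hist
  exact congrArg _ (funext fun t => by rw [copyPlay_of_le f x r (t.is_le.trans hj)])

variable [PseudoMetricSpace E]

def IsWinningStrategy (S : Set E) (α β : ℝ) (f : List (E × ℝ) → E) : Prop :=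
  ∀ (x : ℕ → E) (r : ℕ → ℝ), 0 < r 0 → (∀ i, r (i + 1) = β * (α * r i)) →
    (∀ i, dist (x (i + 1)) (f (hist x r i)) ≤ (1 - β) * (α * r i)) →
    (∀ i, dist (f (hist x r i)) (x i) ≤ (1 - α) * r i) ∧
    ∀ z, (∀ i, dist z (x i) ≤ r i) → z ∈ S

theorem _root_.alphaWinning_iff {d : ℕ} (S : Set (EuclideanSpace ℝ (Fin d))) (α : ℝ) :
    AlphaWinning S α ↔ ∀ β ∈ Ioo (0 : ℝ) 1, ∃ f, IsWinningStrategy S α β f :=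
  Iff.rfl

variable {f x r}

/-- A winning strategy moves legally as long as Bob has: his play so far extends to an
infinite legal play, e.g. by `copyPlay`. -/
theorem IsWinningStrategy.dist_le_of_forall_lt {S : Set E} {α β : ℝ}
    (hf : IsWinningStrategy S α β f) (hα : 0 < α) (hβ : β ∈ Ioo (0 : ℝ) 1) (h0 : 0 < r 0)
    (hr : ∀ i, r (i + 1) = β * (α * r i))
    (hx : ∀ j < k, dist (x (j + 1)) (f (hist x r j)) ≤ (1 - β) * (α * r j)) :
    dist (f (hist x r k)) (x k) ≤ (1 - α) * r k := by
  have hlegal : ∀ j, dist (copyPlay f x r k (j + 1)) (f (hist (copyPlay f x r k) r j)) ≤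
      (1 - β) * (α * r j) := by
    intro j
    rcases lt_or_ge j k with hj | hj
    · rw [copyPlay_of_le f x r hj, hist_copyPlay_of_le f x r hj.le]
      exact hx j hj
    · rw [copyPlay_succ_of_le f x r hj, dist_self]
      have := radius_pos hα hβ.1 h0 hr j
      have : 0 ≤ 1 - β := by linarith [hβ.2]
      positivity
  have := (hf _ r h0 hr hlegal).1 k
  rwa [hist_copyPlay_of_le f x r le_rfl, copyPlay_of_le f x r le_rfl] at this

/-- The conclusion says that Bob's ball at turn `b` lies in Alice's ball at turn `a`. -/
theorem dist_le_of_nested {α β : ℝ} (hr : ∀ i, r (i + 1) = β * (α * r i))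
    (hx : ∀ i, dist (x (i + 1)) (f (hist x r i)) ≤ (1 - β) * (α * r i)) {a b : ℕ} (hab : a < b)
    (hf : ∀ t, a < t → t < b → dist (f (hist x r t)) (x t) ≤ (1 - α) * r t) :
    dist (x b) (f (hist x r a)) ≤ α * r a - r b := by
  induction b, hab using Nat.le_induction with
  | base => linarith [hx a, hr a]
  | succ b hab ih =>
    have hb := hf b hab (by omega)
    have := ih fun t ht htb => hf t ht (by omega)
    linarith [hx b, hr b, dist_triangle4 (x (b + 1)) (f (hist x r b)) (x b) (f (hist x r a))]

end Strategies

def turn (n k : ℕ) : ℕ := 2 ^ n * (2 * k + 1) - 1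

theorem turn_add_one (n k : ℕ) : turn n k + 1 = 2 ^ n * (2 * k + 1) := by
  have : 0 < 2 ^ n * (2 * k + 1) := by positivity
  unfold turn; omega

theorem padicValNat_turn_add_one (n k : ℕ) : padicValNat 2 (turn n k + 1) = n := by
  rw [turn_add_one, padicValNat.mul (by positivity) (by omega), padicValNat.prime_pow,
    padicValNat.eq_zero_of_not_dvd (by omega), add_zero]

theorem turn_bijective : Function.Bijective (Function.uncurry turn) := by
  constructor
  · rintro ⟨n, k⟩ ⟨m, j⟩ h
    simp only [Function.uncurry_apply_pair] at h
    obtain rfl : n = m := by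
      simpa only [padicValNat_turn_add_one] using congrArg (padicValNat 2 <| · + 1) h
    have : 2 ^ n * (2 * k + 1) = 2 ^ n * (2 * j + 1) := by rw [← turn_add_one, ← turn_add_one, h]
    have := Nat.eq_of_mul_eq_mul_left (by positivity) this
    simp only [Prod.mk.injEq, true_and]
    omega
  · intro i
    obtain ⟨n, m, ⟨k, rfl⟩, hi⟩ := Nat.exists_eq_two_pow_mul_odd (Nat.succ_ne_zero i)
    exact ⟨(n, k), by simp only [Function.uncurry, turn]; omega⟩

noncomputable def turnEquiv : ℕ × ℕ ≃ ℕ := Equiv.ofBijective _ turn_bijective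

theorem turn_succ (n k : ℕ) : turn n (k + 1) = turn n k + 2 ^ (n + 1) := by
  have h₁ := turn_add_one n k
  have h₂ := turn_add_one n (k + 1)
  have : 2 ^ n * (2 * (k + 1) + 1) = 2 ^ n * (2 * k + 1) + 2 ^ (n + 1) := by ring
  omega

theorem turn_strictMono (n : ℕ) : StrictMono (turn n) :=
  strictMono_nat_of_lt_succ fun k => by
    rw [turn_succ]
    exact Nat.lt_add_of_pos_right (by positivity)

section Interleave

variable {E : Type*} [Inhabited E]

/-- At turn `turn n k`, play the `n`-th strategy against the history of Bob's moves at the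
turns `turn n 0, …, turn n k`. -/
noncomputable def interleave (F : ℕ → List (E × ℝ) → E) (l : List (E × ℝ)) : E :=
  let p := turnEquiv.symm (l.length - 1)
  F p.1 ((List.range (p.2 + 1)).map fun j => l.getD (turn p.1 j) default)

theorem interleave_hist (F : ℕ → List (E × ℝ) → E) (x : ℕ → E) (r : ℕ → ℝ) (n k : ℕ) :
    interleave F (hist x r (turn n k)) = F n (hist (x ∘ turn n) (r ∘ turn n) k) := by
  have hlen : (hist x r (turn n k)).length = turn n k + 1 := by simp [hist]
  have hp : turnEquiv.symm (turn n k) = (n, k) := turnEquiv.symm_apply_eq.2 rfl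
  simp only [interleave, hlen, Nat.add_sub_cancel, hp]
  congr 1
  refine List.ext_getElem (by simp [hist]) fun t ht _ => ?_
  have htk : turn n t < turn n k + 1 :=
    Nat.lt_succ_of_le ((turn_strictMono n).monotone (by simpa using ht))
  simp only [List.getElem_map, List.getElem_range]
  rw [List.getD_eq_getElem _ _ (hlen ▸ htk)]
  simp only [hist, List.getElem_ofFn, Function.comp_apply]

variable [PseudoMetricSpace E] {F : ℕ → List (E × ℝ) → E} {x : ℕ → E} {r : ℕ → ℝ} {α β : ℝ}

theorem radius_turn_succ (hα : α ≠ 0) (hr : ∀ i, r (i + 1) = β * (α * r i)) (n k : ℕ) :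
    r (turn n (k + 1)) = (α * β) ^ 2 ^ (n + 1) / α * (α * r (turn n k)) := by
  rw [turn_succ, radius_add hr]
  field_simp

/-- What Bob plays between two turns of the `n`-th strategy is a legal move in its game. -/
theorem dist_turn_succ_le (hα : α ≠ 0) (hr : ∀ i, r (i + 1) = β * (α * r i))
    (hx : ∀ i, dist (x (i + 1)) (interleave F (hist x r i)) ≤ (1 - β) * (α * r i)) (n k : ℕ)
    (hF : ∀ t, turn n k < t → t < turn n (k + 1) →
      dist (interleave F (hist x r t)) (x t) ≤ (1 - α) * r t) :
    dist ((x ∘ turn n) (k + 1)) (F n (hist (x ∘ turn n) (r ∘ turn n) k)) ≤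
      (1 - (α * β) ^ 2 ^ (n + 1) / α) * (α * (r ∘ turn n) k) := by
  have := dist_le_of_nested hr hx (turn_strictMono n k.lt_succ_self) hF
  rw [← interleave_hist F, Function.comp_apply, Function.comp_apply]
  linarith [radius_turn_succ hα hr n k]

variable {S : ℕ → Set E}

theorem dist_interleave_le (hα : α ∈ Ioo (0 : ℝ) 1) (hβ : β ∈ Ioo (0 : ℝ) 1)
    (hF : ∀ n, IsWinningStrategy (S n) α ((α * β) ^ 2 ^ (n + 1) / α) (F n)) (h0 : 0 < r 0)
    (hr : ∀ i, r (i + 1) = β * (α * r i))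
    (hx : ∀ i, dist (x (i + 1)) (interleave F (hist x r i)) ≤ (1 - β) * (α * r i)) (i : ℕ) :
    dist (interleave F (hist x r i)) (x i) ≤ (1 - α) * r i := by
  induction i using Nat.strong_induction_on with
  | _ i ih =>
  obtain ⟨⟨n, k⟩, rfl⟩ := turnEquiv.surjective i
  refine interleave_hist F x r n k ▸ (hF n).dist_le_of_forall_lt hα.1
    (mul_pow_div_mem_Ioo hα hβ (by positivity)) (radius_pos hα.1 hβ.1 h0 hr _)
    (radius_turn_succ hα.1.ne' hr n) fun j hj => dist_turn_succ_le hα.1.ne' hr hx n j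
      fun t _ ht => ih t (ht.trans_le ((turn_strictMono n).monotone hj))

theorem interleave_isWinningStrategy (hα : α ∈ Ioo (0 : ℝ) 1) (hβ : β ∈ Ioo (0 : ℝ) 1)
    (hF : ∀ n, IsWinningStrategy (S n) α ((α * β) ^ 2 ^ (n + 1) / α) (F n)) :
    IsWinningStrategy (⋂ n, S n) α β (interleave F) := by
  intro x r h0 hr hx
  have hlegal := dist_interleave_le hα hβ hF h0 hr hx
  refine ⟨hlegal, fun z hz => mem_iInter.2 fun n => ?_⟩
  refine ((hF n) (x ∘ turn n) (r ∘ turn n) (radius_pos hα.1 hβ.1 h0 hr _)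
    (radius_turn_succ hα.1.ne' hr n) fun k => ?_).2 z fun k => hz (turn n k)
  exact dist_turn_succ_le hα.1.ne' hr hx n k fun t _ _ => hlegal t

end Interleave

end SchmidtGame

open SchmidtGame

/-- a countable intersection of α-winning sets for Schmidt's game
on ℝ^d is α-winning. -/
theorem stmt10 {d : ℕ} (α : ℝ) (hα : α ∈ Set.Ioo (0 : ℝ) 1)
    (S : ℕ → Set (EuclideanSpace ℝ (Fin d))) (h : ∀ n, AlphaWinning (S n) α) :
    AlphaWinning (⋂ n, S n) α := by
  rw [alphaWinning_iff]
  intro β hβ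
  choose F hF using fun n =>
    (alphaWinning_iff _ _).1 (h n) _ (mul_pow_div_mem_Ioo hα hβ (pow_ne_zero (n + 1) two_ne_zero))
  exact ⟨interleave F, interleave_isWinningStrategy hα hβ hF⟩
end
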